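/- arXiv:2111.07726 — 5 statements merged into one kernel-verified Lean document; each statement's English description precedes it below -/
import Mathlib

section
/- (Strong duality, Eq. (4).) For any ensemble {(q_i, ρ_i)}_{i=1}^N of qubit states, the guessing probability satisfies p_guess = inf { Re(tr K) : K a 2×2 complex Hermitian matrix with K − q_i ρ_i positive semidefinite for all i }, and this infimum is attained. -/
/-!
Write a Hermitian `2 × 2` matrix in Bloch form `a • 1 + m · σ`: it is positive semidefinite
once `‖m‖ ≤ a`, its trace is `2a`, and `Re tr (X Y) = 2 (a b + ⟪m, n⟫)`. With
`q i • ρ i = a i • 1 + u i · σ`, the matrix `K = γ • 1 + k · σ` is dual feasible as soon as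
`a i + ‖k - u i‖ ≤ γ` for all `i`, so one minimises `max_i (a i + ‖k - u i‖)` over `k ∈ ℝ³`.
At a minimiser no direction decreases all active terms, so by Gordan's alternative some
weights `μ` on the active indices balance the unit vectors `n i` from `k` to `u i`. The POVM
`M i = μ i • (1 + n i · σ)` then has guessing value `tr K`, and weak duality closes the gap.
-/

open Matrix
open scoped ComplexOrder

noncomputable section

/-- The Pauli matrix σ_X. -/
def sigmaX : Matrix (Fin 2) (Fin 2) ℂ := !![0, 1; 1, 0]

/-- The Pauli matrix σ_Y. -/
def sigmaY : Matrix (Fin 2) (Fin 2) ℂ := !![0, -Complex.I; Complex.I, 0]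

/-- The Pauli matrix σ_Z. -/
def sigmaZ : Matrix (Fin 2) (Fin 2) ℂ := !![1, 0; 0, -1]

/-- `v · σ = v₁ σ_X + v₂ σ_Y + v₃ σ_Z` for a vector `v ∈ ℝ³`. -/
def pauliDot (v : EuclideanSpace ℝ (Fin 3)) : Matrix (Fin 2) (Fin 2) ℂ :=
  (v 0 : ℂ) • sigmaX + (v 1 : ℂ) • sigmaY + (v 2 : ℂ) • sigmaZ

/-- A qubit state: a 2×2 complex positive semidefinite matrix with trace 1. -/
def IsQubitState (ρ : Matrix (Fin 2) (Fin 2) ℂ) : Prop :=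
  ρ.PosSemidef ∧ ρ.trace = 1

/-- An `N`-outcome POVM: positive semidefinite matrices summing to the identity. -/
def IsPOVM {N : ℕ} (M : Fin N → Matrix (Fin 2) (Fin 2) ℂ) : Prop :=
  (∀ i, (M i).PosSemidef) ∧ ∑ i, M i = 1

/-- The guessing probability of the ensemble `{(q i, ρ i)}`:
the supremum over all `N`-outcome POVMs of `∑ i, q i · Re (tr (ρ i * M i))`. -/
def pGuess {N : ℕ} (q : Fin N → ℝ) (ρ : Fin N → Matrix (Fin 2) (Fin 2) ℂ) : ℝ :=
  sSup {x : ℝ | ∃ M : Fin N → Matrix (Fin 2) (Fin 2) ℂ,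
    IsPOVM M ∧ x = ∑ i, q i * ((ρ i * M i).trace).re}

/-- A POVM is optimal when it attains the guessing probability. -/
def IsOptimalPOVM {N : ℕ} (q : Fin N → ℝ) (ρ M : Fin N → Matrix (Fin 2) (Fin 2) ℂ) : Prop :=
  IsPOVM M ∧ ∑ i, q i * ((ρ i * M i).trace).re = pGuess q ρ

open Filter Topology NormedSpace Finset
open scoped RealInnerProductSpace

section Convexity

/-- Gordan's alternative. -/
theorem exists_mem_stdSimplex_sum_smul_eq_zero_or_exists_pos {κ V : Type*} [Fintype κ]
    [NormedAddCommGroup V] [NormedSpace ℝ V] (v : κ → V) :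
    (∃ μ ∈ stdSimplex ℝ κ, ∑ j, μ j • v j = 0) ∨ ∃ φ : StrongDual ℝ V, ∀ j, 0 < φ (v j) := by
  classical
  set L := Fintype.linearCombination ℝ v
  by_cases h : (0 : V) ∈ L '' stdSimplex ℝ κ
  · obtain ⟨μ, hμ, h0⟩ := h
    exact Or.inl ⟨μ, hμ, by simpa [L, Fintype.linearCombination_apply] using h0⟩
  · obtain ⟨φ, c, hφ0, hφ⟩ := geometric_hahn_banach_point_closed
      ((convex_stdSimplex ℝ κ).linear_image L)
      ((isCompact_stdSimplex ℝ κ).image L.continuous_of_finiteDimensional).isClosed h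
    refine Or.inr ⟨φ, fun j => ?_⟩
    have := hφ (v j) ⟨Pi.single j 1, single_mem_stdSimplex ℝ j, by simp [L]⟩
    rw [map_zero] at hφ0
    linarith

variable {E : Type*} [NormedAddCommGroup E] [InnerProductSpace ℝ E]

theorem eventually_norm_sub_smul_lt {x d : E} (h : 0 < ⟪x, d⟫) :
    ∀ᶠ t in 𝓝[>] (0 : ℝ), ‖x - t • d‖ < ‖x‖ := by
  have hsmall : ∀ᶠ t in 𝓝[>] (0 : ℝ), t * ‖d‖ ^ 2 < 2 * ⟪x, d⟫ := by
    refine nhdsWithin_le_nhds (Tendsto.eventually_lt_const (v := 0) (by linarith) ?_)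
    exact (continuous_id.mul continuous_const).tendsto' 0 0 (by simp)
  filter_upwards [hsmall, self_mem_nhdsWithin] with t ht (htpos : 0 < t)
  refine lt_of_pow_lt_pow_left₀ 2 (norm_nonneg _) ?_
  rw [norm_sub_sq_real, real_inner_smul_right, norm_smul, Real.norm_of_nonneg htpos.le]
  nlinarith

theorem norm_normalize_le (x : E) : ‖normalize x‖ ≤ 1 := by
  rcases eq_or_ne x 0 with rfl | hx
  · simp [normalize_zero_eq_zero]
  · exact (norm_normalize_eq_one_iff.mpr hx).le

theorem real_inner_normalize_self (x : E) : ⟪normalize x, x⟫ = ‖x‖ := by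
  rw [NormedSpace.normalize, real_inner_smul_left, real_inner_self_eq_norm_sq]
  rcases eq_or_ne ‖x‖ 0 with hx | hx
  · simp [hx]
  · field_simp

theorem real_inner_pos_of_inner_normalize_pos {x y : E} (h : 0 < ⟪normalize x, y⟫) :
    0 < ⟪x, y⟫ := by
  have hx : x ≠ 0 := by
    rintro rfl
    simp [normalize_zero_eq_zero] at h
  rw [← norm_smul_normalize x, real_inner_smul_left]
  exact mul_pos (norm_pos_iff.mpr hx) h

end Convexity

section MinMax

variable {ι E : Type*} [Fintype ι] [NormedAddCommGroup E]

theorem exists_min_max_add_norm_sub [Nonempty ι] [ProperSpace E] (a : ι → ℝ) (u : ι → E) :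
    ∃ γ k₀, (∀ i, a i + ‖k₀ - u i‖ ≤ γ) ∧ ∀ k, ∃ i, γ ≤ a i + ‖k - u i‖ := by
  set G : E → ℝ := fun k => univ.sup' univ_nonempty fun i => a i + ‖k - u i‖
  have hG : Continuous G := Continuous.finset_sup'_apply _ fun i _ => by fun_prop
  obtain ⟨i₀⟩ := ‹Nonempty ι›
  have hcoercive : Tendsto G (cocompact E) atTop := by
    refine tendsto_atTop_mono (fun k => ?_)
      (tendsto_atTop_add_const_right _ (a i₀ - ‖u i₀‖) tendsto_norm_cocompact_atTop)
    have := le_sup' (fun i => a i + ‖k - u i‖) (mem_univ i₀)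
    linarith [norm_sub_norm_le k (u i₀)]
  obtain ⟨k₀, hk₀⟩ := hG.exists_forall_le hcoercive
  refine ⟨G k₀, k₀, fun i => le_sup' (fun i => a i + ‖k₀ - u i‖) (mem_univ i), fun k => ?_⟩
  obtain ⟨i, -, hi⟩ := exists_mem_eq_sup' univ_nonempty fun i => a i + ‖k - u i‖
  exact ⟨i, hi ▸ hk₀ k⟩

variable [InnerProductSpace ℝ E]

/-- The second identity is complementary slackness: `μ` only charges indices that are active at
the minimiser `k₀`. -/
theorem exists_mem_stdSimplex_of_min_max [CompleteSpace E] (a : ι → ℝ) (u : ι → E) {γ : ℝ}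
    {k₀ : E} (hγ : ∀ i, a i + ‖k₀ - u i‖ ≤ γ) (hmin : ∀ k, ∃ i, γ ≤ a i + ‖k - u i‖) :
    ∃ μ ∈ stdSimplex ℝ ι, ∑ i, μ i • normalize (u i - k₀) = 0 ∧
      ∑ i, μ i * (γ - (a i + ‖k₀ - u i‖)) = 0 := by
  rcases exists_mem_stdSimplex_sum_smul_eq_zero_or_exists_pos
    (fun i => (normalize (u i - k₀), γ - (a i + ‖k₀ - u i‖))) with ⟨μ, hμ, h0⟩ | ⟨φ, hφ⟩
  · refine ⟨μ, hμ, ?_, ?_⟩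
    · simpa [Prod.fst_sum] using congrArg Prod.fst h0
    · simpa [Prod.snd_sum] using congrArg Prod.snd h0
  exfalso
  set d := (InnerProductSpace.toDual ℝ E).symm (φ.comp (ContinuousLinearMap.inl ℝ E ℝ))
  have hdescent : ∀ i, ∀ᶠ t in 𝓝[>] (0 : ℝ), a i + ‖k₀ + t • d - u i‖ < γ := by
    intro i
    rcases (hγ i).lt_or_eq with hlt | hactive
    · exact nhdsWithin_le_nhds <|
        ContinuousAt.eventually_lt (by fun_prop) continuousAt_const (by simpa using hlt)
    · have hd : 0 < ⟪u i - k₀, d⟫ := by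
        refine real_inner_pos_of_inner_normalize_pos ?_
        rw [real_inner_comm, InnerProductSpace.toDual_symm_apply]
        simpa [hactive] using hφ i
      filter_upwards [eventually_norm_sub_smul_lt hd] with t ht
      rw [← hactive, norm_sub_rev k₀, show k₀ + t • d - u i = -(u i - k₀ - t • d) by abel,
        norm_neg]
      linarith
  obtain ⟨t, ht⟩ := (eventually_all.2 hdescent).exists
  obtain ⟨i, hi⟩ := hmin (k₀ + t • d)
  exact (hi.trans_lt (ht i)).false

theorem exists_min_max_certificate [Nonempty ι] [FiniteDimensional ℝ E] (a : ι → ℝ) (u : ι → E) :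
    ∃ (γ : ℝ) (k : E) (μ : ι → ℝ) (w : ι → E), (∀ i, a i + ‖k - u i‖ ≤ γ) ∧
      μ ∈ stdSimplex ℝ ι ∧ (∀ i, ‖w i‖ ≤ 1) ∧ ∑ i, μ i • w i = 0 ∧
      ∑ i, μ i * (a i + ⟪w i, u i⟫) = γ := by
  obtain ⟨γ, k₀, hγ, hmin⟩ := exists_min_max_add_norm_sub a u
  obtain ⟨μ, hμ, hbalance, hslack⟩ := exists_mem_stdSimplex_of_min_max a u hγ hmin
  refine ⟨γ, k₀, μ, fun i => normalize (u i - k₀), hγ, hμ, fun i => norm_normalize_le _,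
    hbalance, ?_⟩
  have hterm : ∀ i, μ i * (a i + ⟪normalize (u i - k₀), u i⟫) =
      μ i * γ - μ i * (γ - (a i + ‖k₀ - u i‖)) + ⟪μ i • normalize (u i - k₀), k₀⟫ := by
    intro i
    have := real_inner_normalize_self (u i - k₀)
    rw [inner_sub_right, norm_sub_rev] at this
    rw [real_inner_smul_left]
    linear_combination μ i * this
  rw [sum_congr rfl fun i _ => hterm i, sum_add_distrib, sum_sub_distrib, ← sum_mul, hμ.2,
    hslack, ← sum_inner, hbalance, inner_zero_left]
  ring

end MinMax

theorem Matrix.PosSemidef.trace_mul_nonneg {n 𝕜 : Type*} [Fintype n] [RCLike 𝕜]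
    {A B : Matrix n n 𝕜} (hA : A.PosSemidef) (hB : B.PosSemidef) : 0 ≤ (A * B).trace := by
  classical
  open scoped MatrixOrder in
  obtain ⟨C, rfl⟩ := CStarAlgebra.nonneg_iff_eq_star_mul_self.mp hB.nonneg
  rw [star_eq_conjTranspose, ← mul_assoc, trace_mul_cycle]
  exact (hA.mul_mul_conjTranspose_same C).trace_nonneg

theorem sum_re_trace_mul_le_re_trace {ι n : Type*} [Fintype ι] [Fintype n] [DecidableEq n]
    (q : ι → ℝ) (ρ M : ι → Matrix n n ℂ) {K : Matrix n n ℂ}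
    (hK : ∀ i, (K - q i • ρ i).PosSemidef) (hM : ∀ i, (M i).PosSemidef) (hsum : ∑ i, M i = 1) :
    ∑ i, q i * (ρ i * M i).trace.re ≤ K.trace.re :=
  calc ∑ i, q i * (ρ i * M i).trace.re
      = ∑ i, ((K * M i).trace.re - ((K - q i • ρ i) * M i).trace.re) := by
        simp [sub_mul, trace_sub, trace_smul]
    _ ≤ ∑ i, (K * M i).trace.re :=
        sum_le_sum fun i _ => sub_le_self _ (Complex.le_def.mp ((hK i).trace_mul_nonneg (hM i))).1
    _ = K.trace.re := by rw [← Complex.re_sum, ← trace_sum, ← mul_sum, hsum, mul_one]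

theorem isLeast_pGuess_of_eq {N : ℕ} {q : Fin N → ℝ} {ρ : Fin N → Matrix (Fin 2) (Fin 2) ℂ}
    {K : Matrix (Fin 2) (Fin 2) ℂ} {M : Fin N → Matrix (Fin 2) (Fin 2) ℂ} (hK : K.IsHermitian)
    (hKfeas : ∀ i, (K - q i • ρ i).PosSemidef) (hM : IsPOVM M)
    (hval : ∑ i, q i * ((ρ i * M i).trace).re = K.trace.re) :
    IsLeast {x : ℝ | ∃ K : Matrix (Fin 2) (Fin 2) ℂ, K.IsHermitian ∧
      (∀ i, (K - q i • ρ i).PosSemidef) ∧ x = K.trace.re} (pGuess q ρ) := by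
  have hle : ∀ K' : Matrix (Fin 2) (Fin 2) ℂ, (∀ i, (K' - q i • ρ i).PosSemidef) →
      pGuess q ρ ≤ K'.trace.re := fun K' hK' =>
    csSup_le ⟨_, M, hM, rfl⟩ fun _ ⟨M', hM', hx⟩ =>
      hx ▸ sum_re_trace_mul_le_re_trace q ρ M' hK' hM'.1 hM'.2
  have hge : K.trace.re ≤ pGuess q ρ :=
    le_csSup ⟨K.trace.re, fun _ ⟨M', hM', hx⟩ =>
      hx ▸ sum_re_trace_mul_le_re_trace q ρ M' hKfeas hM'.1 hM'.2⟩ ⟨M, hM, hval.symm⟩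
  refine ⟨⟨K, hK, hKfeas, le_antisymm (hle K hKfeas) hge⟩, ?_⟩
  rintro _ ⟨K', -, hK', rfl⟩
  exact hle K' hK'

section Bloch

def blochMat (a : ℝ) (m : EuclideanSpace ℝ (Fin 3)) : Matrix (Fin 2) (Fin 2) ℂ :=
  (a : ℂ) • 1 + pauliDot m

theorem blochMat_eq (a : ℝ) (m : EuclideanSpace ℝ (Fin 3)) :
    blochMat a m = !![(a : ℂ) + (m 2 : ℝ), (m 0 : ℝ) - (m 1 : ℝ) * Complex.I;
      (m 0 : ℝ) + (m 1 : ℝ) * Complex.I, (a : ℂ) - (m 2 : ℝ)] := by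
  ext i j
  fin_cases i <;> fin_cases j <;>
    simp [blochMat, pauliDot, sigmaX, sigmaY, sigmaZ, one_apply] <;> ring

theorem Matrix.IsHermitian.exists_eq_blochMat {A : Matrix (Fin 2) (Fin 2) ℂ}
    (hA : A.IsHermitian) : ∃ a m, A = blochMat a m := by
  have h00 := hA.apply 0 0
  have h11 := hA.apply 1 1
  have h10 := hA.apply 1 0
  refine ⟨(A 0 0 + A 1 1).re / 2,
    !₂[(A 0 1).re, -(A 0 1).im, (A 0 0 - A 1 1).re / 2], ?_⟩
  rw [blochMat_eq]
  ext i j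
  fin_cases i <;> fin_cases j <;> simp [Complex.ext_iff] at * <;> constructor <;> linarith

theorem blochMat_isHermitian (a : ℝ) (m : EuclideanSpace ℝ (Fin 3)) :
    (blochMat a m).IsHermitian := by
  rw [blochMat_eq]
  ext i j
  fin_cases i <;> fin_cases j <;> simp [Complex.ext_iff]

theorem blochMat_sub (a b : ℝ) (m n : EuclideanSpace ℝ (Fin 3)) :
    blochMat a m - blochMat b n = blochMat (a - b) (m - n) := by
  simp only [blochMat_eq]
  ext i j
  fin_cases i <;> fin_cases j <;> simp <;> ring

theorem sum_blochMat {κ : Type*} (s : Finset κ) (a : κ → ℝ) (m : κ → EuclideanSpace ℝ (Fin 3)) :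
    ∑ i ∈ s, blochMat (a i) (m i) = blochMat (∑ i ∈ s, a i) (∑ i ∈ s, m i) := by
  simp [blochMat, pauliDot, sum_add_distrib, sum_smul]

theorem blochMat_one_zero : blochMat 1 0 = 1 := by
  simp [blochMat, pauliDot]

theorem re_trace_blochMat (a : ℝ) (m : EuclideanSpace ℝ (Fin 3)) :
    (blochMat a m).trace.re = 2 * a := by
  simp only [blochMat_eq, trace_fin_two, of_apply, cons_val', cons_val_zero, cons_val_fin_one,
    cons_val_one, add_add_sub_cancel, Complex.add_re, Complex.ofReal_re]
  ring

theorem re_trace_blochMat_mul_blochMat (a b : ℝ) (m n : EuclideanSpace ℝ (Fin 3)) :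
    (blochMat a m * blochMat b n).trace.re = 2 * (a * b + ⟪m, n⟫) := by
  simp only [blochMat_eq, trace_fin_two, mul_apply, Fin.sum_univ_two, of_apply, cons_val',
    cons_val_zero, cons_val_one, cons_val_fin_one, Complex.add_re, Complex.sub_re, Complex.mul_re,
    Complex.ofReal_re, Complex.ofReal_im, Complex.I_re, Complex.I_im, Complex.add_im,
    Complex.sub_im, Complex.mul_im, PiLp.inner_apply, RCLike.inner_apply, conj_trivial,
    Fin.sum_univ_three]
  ring

theorem blochMat_norm_mul_self (m : EuclideanSpace ℝ (Fin 3)) :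
    blochMat ‖m‖ m * blochMat ‖m‖ m = (2 * ‖m‖) • blochMat ‖m‖ m := by
  have hm := EuclideanSpace.real_norm_sq_eq m
  rw [Fin.sum_univ_three] at hm
  rw [blochMat_eq]
  ext i j
  fin_cases i <;> fin_cases j <;>
    simp [mul_apply, Fin.sum_univ_two, Complex.ext_iff] <;> constructor <;> linarith

theorem posSemidef_blochMat_norm (m : EuclideanSpace ℝ (Fin 3)) :
    (blochMat ‖m‖ m).PosSemidef := by
  rcases (norm_nonneg m).eq_or_lt with h | h
  · rw [← h, (norm_eq_zero.mp h.symm)]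
    simpa [blochMat, pauliDot] using PosSemidef.zero
  · have hB := blochMat_isHermitian ‖m‖ m
    have : blochMat ‖m‖ m = (2 * ‖m‖)⁻¹ • ((blochMat ‖m‖ m)ᴴ * blochMat ‖m‖ m) := by
      rw [hB.eq, blochMat_norm_mul_self, smul_smul, inv_mul_cancel₀ (by positivity), one_smul]
    rw [this]
    exact (posSemidef_conjTranspose_mul_self _).smul (by positivity)

theorem posSemidef_blochMat {a : ℝ} {m : EuclideanSpace ℝ (Fin 3)} (h : ‖m‖ ≤ a) :
    (blochMat a m).PosSemidef := by
  have : blochMat a m = (a - ‖m‖) • (1 : Matrix (Fin 2) (Fin 2) ℂ) + blochMat ‖m‖ m := by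
    simp only [blochMat, sub_smul, ← Complex.coe_smul]
    abel
  rw [this]
  exact (PosSemidef.one.smul (sub_nonneg.mpr h)).add (posSemidef_blochMat_norm m)

end Bloch

theorem strong_duality_general {N : ℕ} (q : Fin N → ℝ) (ρ : Fin N → Matrix (Fin 2) (Fin 2) ℂ)
    (hqsum : ∑ i, q i = 1)
    (hρ : ∀ i, IsQubitState (ρ i)) :
    IsLeast {x : ℝ | ∃ K : Matrix (Fin 2) (Fin 2) ℂ, K.IsHermitian ∧
      (∀ i, (K - q i • ρ i).PosSemidef) ∧ x = K.trace.re} (pGuess q ρ) := by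
  have : Nonempty (Fin N) := by
    rcases N with _ | N
    · simp at hqsum
    · exact ⟨0⟩
  choose a u hau using fun i =>
    ((hρ i).1.isHermitian.smul (IsSelfAdjoint.all (q i))).exists_eq_blochMat
  obtain ⟨γ, k, μ, w, hγ, hμ, hw, hbalance, hval⟩ := exists_min_max_certificate a u
  refine isLeast_pGuess_of_eq (K := blochMat γ k) (M := fun i => blochMat (μ i) (μ i • w i))
    (blochMat_isHermitian γ k) (fun i => ?_) ⟨fun i => ?_, ?_⟩ ?_
  · rw [hau, blochMat_sub]
    exact posSemidef_blochMat (by linarith [hγ i])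
  · refine posSemidef_blochMat ?_
    rw [norm_smul, Real.norm_of_nonneg (hμ.1 i)]
    exact mul_le_of_le_one_right (hμ.1 i) (hw i)
  · rw [sum_blochMat, hμ.2, hbalance, blochMat_one_zero]
  · have hterm : ∀ i, q i * (ρ i * blochMat (μ i) (μ i • w i)).trace.re =
        2 * (μ i * (a i + ⟪w i, u i⟫)) := fun i => by
      rw [← smul_eq_mul, ← Complex.smul_re, ← trace_smul, ← smul_mul_assoc, hau,
        re_trace_blochMat_mul_blochMat, real_inner_smul_right, real_inner_comm]
      ring
    rw [re_trace_blochMat, ← hval, mul_sum]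
    exact sum_congr rfl fun i _ => hterm i

/-- Strong duality (Eq. (4)): the guessing probability equals the
infimum of `Re (tr K)` over Hermitian `K` with `K - q i • ρ i` positive semidefinite
for all `i`, and this infimum is attained (i.e. `pGuess q ρ` is the least element
of the set of dual-feasible values). -/
theorem strong_duality {N : ℕ} (q : Fin N → ℝ) (ρ : Fin N → Matrix (Fin 2) (Fin 2) ℂ)
    (hq : ∀ i, 0 < q i) (hqsum : ∑ i, q i = 1)
    (hρ : ∀ i, IsQubitState (ρ i)) :
    IsLeast {x : ℝ | ∃ K : Matrix (Fin 2) (Fin 2) ℂ, K.IsHermitian ∧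
      (∀ i, (K - q i • ρ i).PosSemidef) ∧ x = K.trace.re} (pGuess q ρ) :=
  strong_duality_general q ρ hqsum hρ

end
end

section
/- (The case D = 0.) Let {(q_i, ρ_i)}_{i=1}^N be an ensemble of qubit states (N ≥ 2) with Bloch vectors v_i and q_1 = max_i q_i. If q_i v_i = q_1 v_1 for every i, then p_guess = q_1. -/
open Matrix
open scoped ComplexOrder

noncomputable section

/-!
Writing `ρ i = (1 + pauliDot (v i)) / 2`, the hypothesis `q i • v i = w` makes the traceless parts
contribute `Re tr (pauliDot w * ∑ i, M i) / 2 = Re tr (pauliDot w) / 2 = 0` for every POVM, so the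
success probability is `∑ i, q i * Re tr (M i) / 2 ≤ (max q) * Re tr 1 / 2 = max q`. The POVM that
always guesses the most likely index attains this bound.
-/

lemma trace_pauliDot (v : EuclideanSpace ℝ (Fin 3)) : (pauliDot v).trace = 0 := by
  simp [pauliDot, sigmaX, sigmaY, sigmaZ, Matrix.trace_fin_two]

lemma pauliDot_smul (c : ℝ) (v : EuclideanSpace ℝ (Fin 3)) :
    pauliDot (c • v) = (c : ℂ) • pauliDot v := by
  simp only [pauliDot, smul_add, smul_smul, PiLp.smul_apply, smul_eq_mul, Complex.ofReal_mul]

lemma re_trace_one_fin_two : ((1 : Matrix (Fin 2) (Fin 2) ℂ).trace).re = 2 := by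
  norm_num [Matrix.trace_fin_two]

lemma re_sum_ofReal_mul {ι : Type*} (s : Finset ι) (q : ι → ℝ) (z : ι → ℂ) :
    (∑ i ∈ s, (q i : ℂ) * z i).re = ∑ i ∈ s, q i * (z i).re := by
  simp only [Complex.re_sum, Complex.re_ofReal_mul]

namespace IsPOVM

variable {N : ℕ} {M : Fin N → Matrix (Fin 2) (Fin 2) ℂ}

lemma re_trace_nonneg (hM : IsPOVM M) (i : Fin N) : 0 ≤ ((M i).trace).re :=
  (Complex.nonneg_iff.mp (hM.1 i).trace_nonneg).1

lemma sum_re_trace (hM : IsPOVM M) : ∑ i, ((M i).trace).re = 2 := by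
  rw [← Complex.re_sum, ← Matrix.trace_sum, hM.2, re_trace_one_fin_two]

lemma sum_mul_re_trace_le (hM : IsPOVM M) {q : Fin N → ℝ} {c : ℝ} (hq : ∀ i, q i ≤ c) :
    ∑ i, q i * ((M i).trace).re ≤ 2 * c :=
  calc ∑ i, q i * ((M i).trace).re ≤ ∑ i, c * ((M i).trace).re :=
        Finset.sum_le_sum fun i _ => mul_le_mul_of_nonneg_right (hq i) (hM.re_trace_nonneg i)
    _ = 2 * c := by rw [← Finset.mul_sum, hM.sum_re_trace, mul_comm]

end IsPOVM

def alwaysGuessPOVM {N : ℕ} (i₀ : Fin N) : Fin N → Matrix (Fin 2) (Fin 2) ℂ :=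
  Pi.single i₀ 1

lemma isPOVM_alwaysGuessPOVM {N : ℕ} (i₀ : Fin N) : IsPOVM (alwaysGuessPOVM i₀) := by
  refine ⟨fun i => ?_, by simp [alwaysGuessPOVM]⟩
  rcases eq_or_ne i i₀ with rfl | hi
  · simpa [alwaysGuessPOVM] using Matrix.PosSemidef.one
  · simpa [alwaysGuessPOVM, hi] using Matrix.PosSemidef.zero

lemma sum_mul_re_trace_alwaysGuessPOVM {N : ℕ} (q : Fin N → ℝ) (i₀ : Fin N) :
    ∑ i, q i * ((alwaysGuessPOVM i₀ i).trace).re = 2 * q i₀ := by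
  rw [Finset.sum_eq_single i₀ (fun i _ hi => by simp [alwaysGuessPOVM, hi]) (by simp),
    alwaysGuessPOVM, Pi.single_eq_same, re_trace_one_fin_two, mul_comm]

lemma sum_mul_re_trace_mul_eq_of_smul_eq {N : ℕ} {q : Fin N → ℝ}
    {v : Fin N → EuclideanSpace ℝ (Fin 3)} {ρ M : Fin N → Matrix (Fin 2) (Fin 2) ℂ}
    {w : EuclideanSpace ℝ (Fin 3)}
    (hρ : ∀ i, ρ i = (2⁻¹ : ℂ) • (1 + pauliDot (v i))) (hs : ∀ i, q i • v i = w)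
    (hM : IsPOVM M) :
    ∑ i, q i * ((ρ i * M i).trace).re = 2⁻¹ * ∑ i, q i * ((M i).trace).re := by
  have hterm : ∀ i, (q i : ℂ) * (ρ i * M i).trace
      = 2⁻¹ * ((q i : ℂ) * (M i).trace) + 2⁻¹ * (pauliDot w * M i).trace := by
    intro i
    rw [hρ i, ← hs i, pauliDot_smul]
    simp only [Matrix.smul_mul, Matrix.add_mul, Matrix.one_mul, Matrix.trace_smul,
      Matrix.trace_add, smul_eq_mul]
    ring
  have hsum : ∑ i, (q i : ℂ) * (ρ i * M i).trace = 2⁻¹ * ∑ i, (q i : ℂ) * (M i).trace := by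
    rw [Finset.sum_congr rfl fun i _ => hterm i, Finset.sum_add_distrib, ← Finset.mul_sum,
      ← Finset.mul_sum, ← Matrix.trace_sum, ← Matrix.mul_sum, hM.2, Matrix.mul_one,
      trace_pauliDot, mul_zero, add_zero]
  rw [← re_sum_ofReal_mul, hsum, ← re_sum_ofReal_mul,
    show (2⁻¹ : ℂ) = ((2⁻¹ : ℝ) : ℂ) by norm_num, Complex.re_ofReal_mul]

lemma pGuess_eq_of_forall_le {N : ℕ} {q : Fin N → ℝ} {ρ M₀ : Fin N → Matrix (Fin 2) (Fin 2) ℂ}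
    (hM₀ : IsPOVM M₀)
    (hle : ∀ M, IsPOVM M →
      ∑ i, q i * ((ρ i * M i).trace).re ≤ ∑ i, q i * ((ρ i * M₀ i).trace).re) :
    pGuess q ρ = ∑ i, q i * ((ρ i * M₀ i).trace).re :=
  IsGreatest.csSup_eq ⟨⟨M₀, hM₀, rfl⟩, by rintro _ ⟨M, hM, rfl⟩; exact hle M hM⟩

/-- The case `D = 0`. If `q i • v i = q 0 • v 0` for every `i`
(where `q 0` is the largest prior probability), then `pGuess = q 0`. -/
theorem guessing_prob_D_zero {N : ℕ} (hN : 2 ≤ N)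
    (q : Fin N → ℝ) (v : Fin N → EuclideanSpace ℝ (Fin 3))
    (ρ : Fin N → Matrix (Fin 2) (Fin 2) ℂ)
    (hρ : ∀ i, ρ i = (2⁻¹ : ℂ) • (1 + pauliDot (v i)))
    (hmax : ∀ i, q i ≤ q ⟨0, by omega⟩)
    (hs : ∀ i, q i • v i = q (⟨0, by omega⟩ : Fin N) • v ⟨0, by omega⟩) :
    pGuess q ρ = q ⟨0, by omega⟩ := by
  set i₀ : Fin N := ⟨0, by omega⟩
  have hvalue := fun M (hM : IsPOVM M) => sum_mul_re_trace_mul_eq_of_smul_eq hρ hs hM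
  have hguess : ∑ i, q i * ((ρ i * alwaysGuessPOVM i₀ i).trace).re = q i₀ := by
    rw [hvalue _ (isPOVM_alwaysGuessPOVM i₀), sum_mul_re_trace_alwaysGuessPOVM]
    ring
  rw [← hguess]
  refine pGuess_eq_of_forall_le (isPOVM_alwaysGuessPOVM i₀) fun M hM => ?_
  rw [hguess, hvalue M hM]
  linarith [hM.sum_mul_re_trace_le hmax]

end
end

section
/- (Polar equation of the hyperboloid, Eq. (13).) Let c, s ∈ ℝ³ with c ≠ 0 and s ≠ 0, and let e ∈ ℝ with |e| < ‖s‖₂. If ‖c − s‖₂ − ‖c‖₂ = e, then ‖c‖₂ = (‖s‖₂² − e²) / (2(‖s‖₂ cosΘ + e)), where cosΘ = ⟨c, s⟩/(‖c‖₂ ‖s‖₂) is the cosine of the angle between c and s; in particular ‖s‖₂ cosΘ + e > 0. -/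
/-! Squaring `‖c - s‖ = ‖c‖ + e` and expanding `‖c - s‖²` gives the linear relation
`2 (⟪c, s⟫ + ‖c‖ e) = ‖s‖² - e²`, whose right side is positive when `|e| < ‖s‖`;
dividing by `‖c‖` turns `⟪c, s⟫ + ‖c‖ e` into `‖c‖ (‖s‖ cos Θ + e)`. -/

open scoped RealInnerProductSpace

section

variable {E : Type*} [NormedAddCommGroup E] {c s : E} {e : ℝ}

theorem norm_pos_of_norm_sub_sub_norm_eq (h : ‖c - s‖ - ‖c‖ = e) (he : |e| < ‖s‖) :
    0 < ‖c‖ := by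
  refine norm_pos_iff.2 ?_
  rintro rfl
  rw [zero_sub, norm_neg, norm_zero, sub_zero] at h
  rw [← h, abs_norm] at he
  exact lt_irrefl _ he

variable [InnerProductSpace ℝ E]

theorem two_mul_inner_add_norm_mul_eq_of_norm_sub_sub_norm_eq (h : ‖c - s‖ - ‖c‖ = e) :
    2 * (⟪c, s⟫ + ‖c‖ * e) = ‖s‖ ^ 2 - e ^ 2 := by
  rw [← h]
  linear_combination norm_sub_sq_real c s

theorem inner_add_norm_mul_pos_of_norm_sub_sub_norm_eq (h : ‖c - s‖ - ‖c‖ = e)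
    (he : |e| < ‖s‖) : 0 < ⟪c, s⟫ + ‖c‖ * e := by
  have hsq : e ^ 2 < ‖s‖ ^ 2 := sq_lt_sq.2 (by rwa [abs_norm])
  linarith [two_mul_inner_add_norm_mul_eq_of_norm_sub_sub_norm_eq h]

end

theorem hyperboloid_polar_equation_general (c s : EuclideanSpace ℝ (Fin 3)) (e : ℝ)
    (he : |e| < ‖s‖)
    (h : ‖c - s‖ - ‖c‖ = e) :
    0 < ‖s‖ * ((inner ℝ c s : ℝ) / (‖c‖ * ‖s‖)) + e ∧
    ‖c‖ = (‖s‖ ^ 2 - e ^ 2) / (2 * (‖s‖ * ((inner ℝ c s : ℝ) / (‖c‖ * ‖s‖)) + e)) := by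
  have hc : 0 < ‖c‖ := norm_pos_of_norm_sub_sub_norm_eq h he
  have hs : 0 < ‖s‖ := (abs_nonneg e).trans_lt he
  have hcos : ‖s‖ * (⟪c, s⟫ / (‖c‖ * ‖s‖)) + e = (⟪c, s⟫ + ‖c‖ * e) / ‖c‖ := by
    field_simp
  have hpos := inner_add_norm_mul_pos_of_norm_sub_sub_norm_eq h he
  rw [hcos, ← two_mul_inner_add_norm_mul_eq_of_norm_sub_sub_norm_eq h]
  refine ⟨div_pos hpos hc, ?_⟩
  field_simp

/-- Polar equation of the hyperboloid (Eq. (13)).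
Here `cos Θ = ⟪c, s⟫ / (‖c‖ ‖s‖)`. -/
theorem hyperboloid_polar_equation (c s : EuclideanSpace ℝ (Fin 3)) (e : ℝ)
    (hc : c ≠ 0) (hs : s ≠ 0) (he : |e| < ‖s‖)
    (h : ‖c - s‖ - ‖c‖ = e) :
    0 < ‖s‖ * ((inner ℝ c s : ℝ) / (‖c‖ * ‖s‖)) + e ∧
    ‖c‖ = (‖s‖ ^ 2 - e ^ 2) / (2 * (‖s‖ * ((inner ℝ c s : ℝ) / (‖c‖ * ‖s‖)) + e)) :=
  hyperboloid_polar_equation_general c s e he h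
end

section
/- (Uniqueness of the hyperboloid intersection point in the cone, case N = 4.) Let s_2, s_3, s_4 ∈ ℝ³ be such that {0, s_2, s_3, s_4} is affinely independent, and let e_2, e_3, e_4 ≥ 0. Let Λ = { λ x : λ > 0, x ∈ relative interior of conv{s_2, s_3, s_4} }. Then there is at most one point c ∈ Λ satisfying ‖c − s_i‖₂ − ‖c‖₂ = e_i for all i ∈ {2, 3, 4}. -/
open RealInnerProductSpace

private lemma hull_triple_mem {s₂ s₃ s₄ x : EuclideanSpace ℝ (Fin 3)}
    (hx : x ∈ convexHull ℝ ({s₂, s₃, s₄} : Set _)) :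
    ∃ a b c : ℝ, 0 ≤ a ∧ 0 ≤ b ∧ 0 ≤ c ∧ a + b + c = 1 ∧
      x = a • s₂ + b • s₃ + c • s₄ := by
  rw [show ({s₂, s₃, s₄} : Set _) = insert s₂ {s₃, s₄} from rfl,
    convexHull_insert ⟨s₃, by simp⟩, mem_convexJoin] at hx
  obtain ⟨p, hp, z, hz, hseg⟩ := hx
  rw [Set.mem_singleton_iff] at hp
  rw [convexHull_pair] at hz
  obtain ⟨b, c, hb, hc, hbc, hz⟩ := hz
  obtain ⟨u, v, hu, hv, huv, hx⟩ := hseg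
  refine ⟨u, v * b, v * c, hu, by positivity, by positivity, by nlinarith, ?_⟩
  rw [← hx, ← hz, hp, smul_add, smul_smul, smul_smul, add_assoc]

/-- Cauchy–Schwarz step: from `⟪c - c', c⟫ = (‖c'‖ - ‖c‖) * A` with `A ≥ 0`
and `‖c‖ > 0`, deduce `‖c‖ ≤ ‖c'‖`. -/
private lemma norm_le_step {c c' : EuclideanSpace ℝ (Fin 3)} {A : ℝ} (hA : 0 ≤ A)
    (h : ⟪c - c', c⟫ = (‖c'‖ - ‖c‖) * A) : ‖c‖ ≤ ‖c'‖ := by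
  have hcs : ⟪c', c⟫ ≤ ‖c'‖ * ‖c‖ := real_inner_le_norm c' c
  have hexp : ⟪c - c', c⟫ = ‖c‖ ^ 2 - ⟪c', c⟫ := by
    rw [inner_sub_left, real_inner_self_eq_norm_sq]
  nlinarith [norm_nonneg c, norm_nonneg c', sq_nonneg (‖c‖ - ‖c'‖)]

set_option maxHeartbeats 1000000 in
/-- Uniqueness of the hyperboloid intersection point in the cone
`Λ = {l • x : l > 0, x ∈ relint conv {s₂, s₃, s₄}}`, case `N = 4`. -/
theorem hyperboloid_intersection_unique (s₂ s₃ s₄ : EuclideanSpace ℝ (Fin 3))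
    (e₂ e₃ e₄ : ℝ)
    (haff : AffineIndependent ℝ ![(0 : EuclideanSpace ℝ (Fin 3)), s₂, s₃, s₄])
    (he₂ : 0 ≤ e₂) (he₃ : 0 ≤ e₃) (he₄ : 0 ≤ e₄) :
    ∀ c c' : EuclideanSpace ℝ (Fin 3),
      (∃ l > (0 : ℝ), ∃ x ∈ intrinsicInterior ℝ (convexHull ℝ {s₂, s₃, s₄}), c = l • x) →
      (∃ l > (0 : ℝ), ∃ x ∈ intrinsicInterior ℝ (convexHull ℝ {s₂, s₃, s₄}), c' = l • x) →
      ‖c - s₂‖ - ‖c‖ = e₂ → ‖c - s₃‖ - ‖c‖ = e₃ → ‖c - s₄‖ - ‖c‖ = e₄ →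
      ‖c' - s₂‖ - ‖c'‖ = e₂ → ‖c' - s₃‖ - ‖c'‖ = e₃ → ‖c' - s₄‖ - ‖c'‖ = e₄ →
      c = c' := by
  intro c c' hc hc' h2 h3 h4 h2' h3' h4'
  -- unpack cone memberships into nonnegative combinations
  obtain ⟨l, hl, x, hxint, rfl⟩ := hc
  obtain ⟨l', hl', x', hxint', rfl⟩ := hc'
  obtain ⟨a, b, g, ha, hb, hg, habg, hxeq⟩ :=
    hull_triple_mem (intrinsicInterior_subset hxint)
  obtain ⟨a', b', g', ha', hb', hg', habg', hxeq'⟩ :=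
    hull_triple_mem (intrinsicInterior_subset hxint')
  -- x ≠ 0, hence ‖l • x‖ > 0 (same for x')
  have hne : ∀ (a b g : ℝ), 0 ≤ a → 0 ≤ b → 0 ≤ g → a + b + g = 1 →
      a • s₂ + b • s₃ + g • s₄ ≠ 0 := by
    intro a b g ha hb hg habg h0
    have := affineIndependent_iff.mp haff Finset.univ ![-1, a, b, g]
      (by simp [Fin.sum_univ_four]; linarith)
      (by simpa [Fin.sum_univ_four, add_assoc] using h0)
      0 (Finset.mem_univ 0)
    norm_num at this
  have hcpos : 0 < ‖l • x‖ := by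
    rw [norm_pos_iff]
    exact smul_ne_zero (ne_of_gt hl) (hxeq ▸ hne a b g ha hb hg habg)
  have hcpos' : 0 < ‖l' • x'‖ := by
    rw [norm_pos_iff]
    exact smul_ne_zero (ne_of_gt hl') (hxeq' ▸ hne a' b' g' ha' hb' hg' habg')
  set C := l • x with hC
  set C' := l' • x' with hC'
  -- key inner-product identities from the distance equations
  have key : ∀ (s : EuclideanSpace ℝ (Fin 3)) (e : ℝ),
      ‖C - s‖ - ‖C‖ = e → ‖C' - s‖ - ‖C'‖ = e → ⟪C - C', s⟫ = (‖C'‖ - ‖C‖) * e := by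
    intro s e h h'
    have q : ‖C - s‖ ^ 2 = (‖C‖ + e) ^ 2 := by rw [show ‖C - s‖ = ‖C‖ + e by linarith]
    have q' : ‖C' - s‖ ^ 2 = (‖C'‖ + e) ^ 2 := by rw [show ‖C' - s‖ = ‖C'‖ + e by linarith]
    rw [norm_sub_sq_real] at q q'
    rw [inner_sub_left]
    nlinarith
  have k2 := key s₂ e₂ h2 h2'
  have k3 := key s₃ e₃ h3 h3'
  have k4 := key s₄ e₄ h4 h4'
  -- inner products with C and C'
  have icc : ⟪C - C', C⟫ = (‖C'‖ - ‖C‖) * (l * (a * e₂ + b * e₃ + g * e₄)) := by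
    nth_rewrite 2 [hC]
    rw [hxeq, inner_smul_right, inner_add_right, inner_add_right, inner_smul_right,
      inner_smul_right, inner_smul_right, k2, k3, k4]
    ring
  have icc' : ⟪C - C', C'⟫ = (‖C'‖ - ‖C‖) * (l' * (a' * e₂ + b' * e₃ + g' * e₄)) := by
    nth_rewrite 2 [hC']
    rw [hxeq', inner_smul_right, inner_add_right, inner_add_right, inner_smul_right,
      inner_smul_right, inner_smul_right, k2, k3, k4]
    ring
  have hA : 0 ≤ l * (a * e₂ + b * e₃ + g * e₄) :=
    mul_nonneg hl.le (add_nonneg (add_nonneg (mul_nonneg ha he₂) (mul_nonneg hb he₃))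
      (mul_nonneg hg he₄))
  have hA' : 0 ≤ l' * (a' * e₂ + b' * e₃ + g' * e₄) :=
    mul_nonneg hl'.le (add_nonneg (add_nonneg (mul_nonneg ha' he₂) (mul_nonneg hb' he₃))
      (mul_nonneg hg' he₄))
  -- both directions of the norm comparison
  have hle : ‖C‖ ≤ ‖C'‖ := norm_le_step hA icc
  have hge : ‖C'‖ ≤ ‖C‖ := by
    refine norm_le_step hA' ?_
    rw [show C' - C = -(C - C') by abel, inner_neg_left, icc']
    ring
  have heq : ‖C‖ = ‖C'‖ := le_antisymm hle hge
  -- conclude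
  have : ⟪C - C', C - C'⟫ = (0 : ℝ) := by
    rw [inner_sub_right, icc, icc', heq]
    ring
  have := inner_self_eq_zero.mp this
  exact sub_eq_zero.mp this
end

section
/- (Norm of the ray–edge intersection point, Eq. (30) for N = 3.) Let s_2, s_3 ∈ ℝ³ be linearly independent with l_i = ‖s_i‖₂, let θ_23 ∈ (0,π) be the angle between s_2 and s_3, and let c ∈ ℝ³ be a nonzero vector of the form c = λ(t s_2 + (1−t)s_3) with λ > 0 and t ∈ (0,1); let α_i be the angle between c and s_i (i = 2,3). Then the ray {μ c : μ > 0} meets the segment conv{s_2, s_3} in exactly one point g, and ‖g‖₂ = l_2 l_3 sin θ_23 / (l_2 sin α_2 + l_3 sin α_3). -/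
open InnerProductGeometry RealInnerProductSpace

/-- Norm of the ray–edge intersection point (Eq. (30) for `N = 3`).
The ray `{μ • c : μ > 0}` meets the segment `conv {s₂, s₃}` in exactly one point
`g`, and `‖g‖ = l₂ l₃ sin θ₂₃ / (l₂ sin α₂ + l₃ sin α₃)`. -/
theorem ray_edge_intersection (s₂ s₃ : EuclideanSpace ℝ (Fin 3))
    (hind : LinearIndependent ℝ ![s₂, s₃])
    (c : EuclideanSpace ℝ (Fin 3)) (lam t : ℝ)
    (hlam : 0 < lam) (ht : t ∈ Set.Ioo (0 : ℝ) 1)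
    (hc : c = lam • (t • s₂ + (1 - t) • s₃)) (hc0 : c ≠ 0) :
    (∃! g : EuclideanSpace ℝ (Fin 3),
      (∃ μ > (0 : ℝ), g = μ • c) ∧ g ∈ segment ℝ s₂ s₃) ∧
    (∀ g : EuclideanSpace ℝ (Fin 3),
      ((∃ μ > (0 : ℝ), g = μ • c) ∧ g ∈ segment ℝ s₂ s₃) →
      ‖g‖ = ‖s₂‖ * ‖s₃‖ * Real.sin (InnerProductGeometry.angle s₂ s₃) /
        (‖s₂‖ * Real.sin (InnerProductGeometry.angle c s₂) +
         ‖s₃‖ * Real.sin (InnerProductGeometry.angle c s₃))) := by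
  obtain ⟨ht0, ht1⟩ := ht
  set g₀ : EuclideanSpace ℝ (Fin 3) := t • s₂ + (1 - t) • s₃ with hg₀
  have hpair := LinearIndependent.pair_iff.1 hind
  have hg₀ray : ∃ μ > (0 : ℝ), g₀ = μ • c := by
    refine ⟨lam⁻¹, inv_pos.2 hlam, ?_⟩
    rw [hc, smul_smul, inv_mul_cancel₀ hlam.ne', one_smul]
  have hg₀seg : g₀ ∈ segment ℝ s₂ s₃ :=
    ⟨t, 1 - t, ht0.le, by linarith, by ring, rfl⟩
  have huniq : ∀ g : EuclideanSpace ℝ (Fin 3),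
      ((∃ μ > (0 : ℝ), g = μ • c) ∧ g ∈ segment ℝ s₂ s₃) → g = g₀ := by
    rintro g ⟨⟨μ, hμ, rfl⟩, ⟨a, b, ha, hb, hab, habg⟩⟩
    have hzero : (μ * lam * t - a) • s₂ + (μ * lam * (1 - t) - b) • s₃ = 0 := by
      have h0 : a • s₂ + b • s₃ = μ • (lam • (t • s₂ + (1 - t) • s₃)) := by
        rw [habg, hc, hg₀]
      linear_combination (norm := module) -h0
    obtain ⟨h1, h2⟩ := hpair _ _ hzero
    have hml : μ * lam = 1 := by nlinarith
    rw [hc, smul_smul, hml, one_smul]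
  refine ⟨⟨g₀, ⟨hg₀ray, hg₀seg⟩, fun g hg => huniq g hg⟩, ?_⟩
  intro g hg
  rw [huniq g hg]
  have hg₀ne : g₀ ≠ 0 := by
    intro h
    exact hc0 (by rw [hc, h, smul_zero])
  have hng₀ : (0:ℝ) < ‖g₀‖ := norm_pos_iff.2 hg₀ne
  have ha2 : angle c s₂ = angle g₀ s₂ := by rw [hc, angle_smul_left_of_pos _ _ hlam]
  have ha3 : angle c s₃ = angle g₀ s₃ := by rw [hc, angle_smul_left_of_pos _ _ hlam]
  have hi2 : ⟪g₀, s₂⟫ = t * ⟪s₂, s₂⟫ + (1 - t) * ⟪s₂, s₃⟫ := by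
    rw [hg₀, inner_add_left, real_inner_smul_left, real_inner_smul_left,
      real_inner_comm s₂ s₃]
  have hi3 : ⟪g₀, s₃⟫ = t * ⟪s₂, s₃⟫ + (1 - t) * ⟪s₃, s₃⟫ := by
    rw [hg₀, inner_add_left, real_inner_smul_left, real_inner_smul_left]
  have hii : ⟪g₀, g₀⟫ = t * (t * ⟪s₂, s₂⟫ + (1 - t) * ⟪s₂, s₃⟫)
      + (1 - t) * (t * ⟪s₂, s₃⟫ + (1 - t) * ⟪s₃, s₃⟫) := by
    nth_rewrite 1 [hg₀]
    rw [inner_add_left, real_inner_smul_left, real_inner_smul_left,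
      real_inner_comm g₀ s₂, real_inner_comm g₀ s₃, hi2, hi3]
  have hs₂ne : s₂ ≠ 0 := by simpa using hind.ne_zero 0
  have hppos : (0:ℝ) < ⟪s₂, s₂⟫ := by
    rw [real_inner_self_eq_norm_sq]
    exact pow_pos (norm_pos_iff.2 hs₂ne) 2
  have hA : (0:ℝ) < ⟪s₂, s₂⟫ * ⟪s₃, s₃⟫ - ⟪s₂, s₃⟫ * ⟪s₂, s₃⟫ := by
    set w : EuclideanSpace ℝ (Fin 3) := ⟪s₂, s₂⟫ • s₃ - ⟪s₂, s₃⟫ • s₂ with hw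
    have hwne : w ≠ 0 := by
      intro h
      have h' : (-⟪s₂, s₃⟫) • s₂ + ⟪s₂, s₂⟫ • s₃ = 0 := by
        rw [← h, hw]; module
      exact hppos.ne' ((hpair _ _ h').2)
    have hwpos : (0:ℝ) < ⟪w, w⟫ := by
      rw [real_inner_self_eq_norm_sq]
      exact pow_pos (norm_pos_iff.2 hwne) 2
    have hwval : ⟪w, w⟫ = ⟪s₂, s₂⟫ * (⟪s₂, s₂⟫ * ⟪s₃, s₃⟫ - ⟪s₂, s₃⟫ * ⟪s₂, s₃⟫) := by
      rw [hw, inner_sub_left, inner_sub_right, inner_sub_right, real_inner_smul_left,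
        real_inner_smul_left, real_inner_smul_left, real_inner_smul_left,
        real_inner_smul_right, real_inner_smul_right, real_inner_smul_right,
        real_inner_smul_right, real_inner_comm s₂ s₃]
      ring
    rw [hwval] at hwpos
    nlinarith
  set A : ℝ := Real.sqrt (⟪s₂, s₂⟫ * ⟪s₃, s₃⟫ - ⟪s₂, s₃⟫ * ⟪s₂, s₃⟫) with hAdef
  have hApos : (0:ℝ) < A := Real.sqrt_pos.2 hA
  have hθ : Real.sin (angle s₂ s₃) * (‖s₂‖ * ‖s₃‖) = A := by
    rw [sin_angle_mul_norm_mul_norm]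
  have h2 : Real.sin (angle g₀ s₂) * (‖g₀‖ * ‖s₂‖) = (1 - t) * A := by
    rw [sin_angle_mul_norm_mul_norm, hii, hi2]
    rw [show (t * (t * ⟪s₂, s₂⟫ + (1 - t) * ⟪s₂, s₃⟫)
        + (1 - t) * (t * ⟪s₂, s₃⟫ + (1 - t) * ⟪s₃, s₃⟫)) * ⟪s₂, s₂⟫ -
        (t * ⟪s₂, s₂⟫ + (1 - t) * ⟪s₂, s₃⟫) * (t * ⟪s₂, s₂⟫ + (1 - t) * ⟪s₂, s₃⟫)
        = (1 - t) ^ 2 * (⟪s₂, s₂⟫ * ⟪s₃, s₃⟫ - ⟪s₂, s₃⟫ * ⟪s₂, s₃⟫) by ring]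
    rw [Real.sqrt_mul (sq_nonneg _), Real.sqrt_sq (by linarith), hAdef]
  have h3 : Real.sin (angle g₀ s₃) * (‖g₀‖ * ‖s₃‖) = t * A := by
    rw [sin_angle_mul_norm_mul_norm, hii, hi3]
    rw [show (t * (t * ⟪s₂, s₂⟫ + (1 - t) * ⟪s₂, s₃⟫)
        + (1 - t) * (t * ⟪s₂, s₃⟫ + (1 - t) * ⟪s₃, s₃⟫)) * ⟪s₃, s₃⟫ -
        (t * ⟪s₂, s₃⟫ + (1 - t) * ⟪s₃, s₃⟫) * (t * ⟪s₂, s₃⟫ + (1 - t) * ⟪s₃, s₃⟫)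
        = t ^ 2 * (⟪s₂, s₂⟫ * ⟪s₃, s₃⟫ - ⟪s₂, s₃⟫ * ⟪s₂, s₃⟫) by ring]
    rw [Real.sqrt_mul (sq_nonneg _), Real.sqrt_sq (by linarith), hAdef]
  rw [ha2, ha3]
  have hden : ‖s₂‖ * Real.sin (angle g₀ s₂) + ‖s₃‖ * Real.sin (angle g₀ s₃) = A / ‖g₀‖ := by
    rw [eq_div_iff hng₀.ne']
    linear_combination h2 + h3
  have hnum : ‖s₂‖ * ‖s₃‖ * Real.sin (angle s₂ s₃) = A := by linear_combination hθ
  rw [hden, hnum, div_div_eq_mul_div, mul_comm, mul_div_assoc, div_self hApos.ne', mul_one]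
end
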